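/- arXiv:2206.00928 — 2 statements merged into one kernel-verified Lean document; each statement's English description precedes it below -/
import Mathlib

section
/- Let α ∈ {+,−} and let G be an α-semiradial with root r. Then every neighbor of the absolute ground H of G is α-linear in G with respect to r, i.e., every vertex of V(G)∖V(H) adjacent to V(H) has an α-ditrail to r but no (−α)-ditrail to r. -/
/-- A bidirected graph on vertex type `V`: each edge has two ends (`fst`, `snd`),
each carrying a sign (`true` = `+`, `false` = `-`). Loops are edges with `fst = snd`. -/
structure BG (V : Type) where
  E : Type
  fst : E → V
  snd : E → V
  s1 : E → Bool
  s2 : E → Bool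

namespace BG

variable {V : Type}

/-- A step is a traversal of an edge in one of the two directions. -/
abbrev Step (G : BG V) : Type := G.E × Bool

variable (G : BG V)

def src (st : G.Step) : V := if st.2 then G.fst st.1 else G.snd st.1
def tgt (st : G.Step) : V := if st.2 then G.snd st.1 else G.fst st.1
/-- sign of the edge at the source end of the step -/
def ssign (st : G.Step) : Bool := if st.2 then G.s1 st.1 else G.s2 st.1
/-- sign of the edge at the target end of the step -/
def tsign (st : G.Step) : Bool := if st.2 then G.s2 st.1 else G.s1 st.1

/-- `p` is a ditrail from `x` to `y`: an edge-simple walk such that at each internal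
vertex the sign of the entering edge-end and the sign of the leaving edge-end are opposite. -/
def IsDitrail (p : List G.Step) (x y : V) : Prop :=
  (p.map Prod.fst).Nodup ∧
  List.Chain' (fun a b => G.tgt a = G.src b ∧ G.tsign a = !G.ssign b) p ∧
  (∀ st, p.head? = some st → G.src st = x) ∧
  (∀ st, p.getLast? = some st → G.tgt st = y) ∧
  (p = [] → x = y)

/-- There is an `(α, β)`-ditrail from `x` to `y` using only edges from `Es` and avoiding
the vertex set `A`.  The trivial (empty) ditrail from `x` to `x` counts as an
`(!β, β)`-ditrail for each `β`. -/
def ReachWA (Es : Set G.E) (A : Set V) (α β : Bool) (x y : V) : Prop :=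
  ∃ p : List G.Step, G.IsDitrail p x y ∧ (∀ st ∈ p, st.1 ∈ Es) ∧
    x ∉ A ∧ (∀ st ∈ p, G.tgt st ∉ A) ∧
    (p.head?.map G.ssign).getD (!β) = α ∧ (p.getLast?.map G.tsign).getD β = β

/-- There is an `(α, β)`-ditrail from `x` to `y` using only edges from `Es`. -/
def ReachW (Es : Set G.E) (α β : Bool) (x y : V) : Prop := G.ReachWA Es ∅ α β x y

/-- There is an `(α, β)`-ditrail from `x` to `y` in `G`. -/
def Reach (α β : Bool) (x y : V) : Prop := G.ReachW Set.univ α β x y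

/-- There is an `α`-ditrail from `x` to `y` in `G` (only the starting sign is constrained). -/
def ReachS (α : Bool) (x y : V) : Prop := ∃ β, G.Reach α β x y

/-- There is an `α`-ditrail from `x` to `y` using only edges from `Es`. -/
def ReachWS (Es : Set G.E) (α : Bool) (x y : V) : Prop := ∃ β, G.ReachW Es α β x y

def Adj (u v : V) : Prop :=
  ∃ e : G.E, (G.fst e = u ∧ G.snd e = v) ∨ (G.fst e = v ∧ G.snd e = u)

/-- `G` is an `α`-radial with root `r`. -/
def IsRadial (α : Bool) (r : V) : Prop := ∀ v, G.Reach α (!α) v r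
/-- `G` is an `α`-semiradial with root `r`. -/
def IsSemiradial (α : Bool) (r : V) : Prop := ∀ v, G.ReachS α v r

/-- `x` is an (`α`-)strong vertex with respect to `r`. -/
def StrongVtx (α : Bool) (r x : V) : Prop :=
  G.Reach α (!α) x r ∧ G.Reach (!α) (!α) x r
/-- `x` is a sublinear vertex with respect to `r`. -/
def SublinearVtx (α : Bool) (r x : V) : Prop :=
  G.Reach α (!α) x r ∧ ¬ G.Reach (!α) (!α) x r
/-- `x` is an absolute vertex with respect to `r`. -/
def AbsoluteVtx (r x : V) : Prop := ∀ α : Bool, G.ReachS α x r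
/-- `x` is an `α`-linear vertex with respect to `r`. -/
def LinearVtx (α : Bool) (r x : V) : Prop := G.ReachS α x r ∧ ¬ G.ReachS (!α) x r

/-- sharpness at the root: every neighbor of `r` is linear. -/
def SharpAt (α : Bool) (r : V) : Prop := ∀ v, G.Adj v r → G.LinearVtx α r v

/-- `v` is joined to `r` by an edge whose end at `r` has sign `!α`. -/
def OppNbr (α : Bool) (r v : V) : Prop :=
  ∃ e : G.E, (G.fst e = r ∧ G.snd e = v ∧ G.s1 e = !α) ∨
    (G.snd e = r ∧ G.fst e = v ∧ G.s2 e = !α)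

/-- roundness: every vertex joined to `r` by an edge whose end at `r` has sign `!α` is strong. -/
def RoundAt (α : Bool) (r : V) : Prop := ∀ v, G.OppNbr α r v → G.StrongVtx α r v

/-- `e` is a cut edge of `S` whose end in `S` carries the sign `γ`. -/
def CutSign (S : Set V) (γ : Bool) (e : G.E) : Prop :=
  (G.fst e ∈ S ∧ G.snd e ∉ S ∧ G.s1 e = γ) ∨
  (G.snd e ∈ S ∧ G.fst e ∉ S ∧ G.s2 e = γ)

/-- edges of the subgraph of `G` induced by `S` -/
def inducedEdges (S : Set V) : Set G.E := {e | G.fst e ∈ S ∧ G.snd e ∈ S}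

/-- a simple diear relative to `S`: a nonempty ditrail whose first and last vertices
lie in `S` and whose internal vertices avoid `S`. -/
def IsSimpleDiear (S : Set V) (p : List G.Step) : Prop :=
  p ≠ [] ∧ ∃ u v, G.IsDitrail p u v ∧ u ∈ S ∧ v ∈ S ∧
    ∀ w ∈ p.dropLast.map G.tgt, w ∉ S

/-- a scoop diear relative to `S` with grip `e`: of the form `(y,e,x) + P` where `y ∈ S`,
`x ∉ S`, and `P` is a ditrail from `x` back to `y` ending with the reverse traversal of `e`,
whose internal vertices avoid `S`. -/
def IsScoopDiear (S : Set V) (e : G.E) (p : List G.Step) : Prop :=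
  ∃ d q, p = (e, d) :: q ∧ G.src (e, d) ∈ S ∧ G.tgt (e, d) ∉ S ∧
    G.IsDitrail q (G.tgt (e, d)) (G.src (e, d)) ∧
    q.getLast? = some (e, !d) ∧
    (∀ st, q.head? = some st → G.ssign st = !(G.tsign (e, d))) ∧
    ∀ w ∈ q.dropLast.map G.tgt, w ∉ S

/-- A subgraph of `G`. -/
structure Sub (G : BG V) where
  verts : Set V
  edges : Set G.E
  fst_mem : ∀ e ∈ edges, G.fst e ∈ verts
  snd_mem : ∀ e ∈ edges, G.snd e ∈ verts

variable {G}

def Sub.le (K L : G.Sub) : Prop := K.verts ⊆ L.verts ∧ K.edges ⊆ L.edges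

def Sub.union (K L : G.Sub) : G.Sub where
  verts := K.verts ∪ L.verts
  edges := K.edges ∪ L.edges
  fst_mem := fun e he => he.elim (fun h => Or.inl (K.fst_mem e h)) (fun h => Or.inr (L.fst_mem e h))
  snd_mem := fun e he => he.elim (fun h => Or.inl (K.snd_mem e h)) (fun h => Or.inr (L.snd_mem e h))

/-- the subgraph `K` is an `α`-semiradial with root `r`. -/
def Sub.IsSemiradial (K : G.Sub) (α : Bool) (r : V) : Prop :=
  r ∈ K.verts ∧ ∀ v ∈ K.verts, G.ReachWS K.edges α v r

/-- the subgraph `K` is an absolute semiradial with root `r`. -/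
def Sub.IsAbsolute (K : G.Sub) (r : V) : Prop := ∀ α : Bool, K.IsSemiradial α r

/-- the subgraph `K` is an `α`-radial with root `r`. -/
def Sub.IsRadial (K : G.Sub) (α : Bool) (r : V) : Prop :=
  r ∈ K.verts ∧ ∀ v ∈ K.verts, G.ReachW K.edges α (!α) v r

/-- the subgraph `K` is a strong `α`-radial with root `r`. -/
def Sub.IsStrong (K : G.Sub) (α : Bool) (r : V) : Prop :=
  K.IsRadial α r ∧ ∀ v ∈ K.verts, G.ReachW K.edges (!α) (!α) v r

/-- the subgraph `K` is an almost strong `α`-radial with root `r`. -/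
def Sub.IsAlmostStrong (K : G.Sub) (α : Bool) (r : V) : Prop :=
  K.IsRadial α r ∧ (∀ v ∈ K.verts, v ≠ r → G.ReachW K.edges (!α) (!α) v r) ∧
    ¬ G.ReachW K.edges (!α) (!α) r r

/-- the subgraph `K` is a linear `α`-semiradial with root `r`: no loop at `r`,
and no nontrivial `(!α)`-ditrail (within `K`) to `r`. -/
def Sub.IsLinearSR (K : G.Sub) (α : Bool) (r : V) : Prop :=
  K.IsSemiradial α r ∧ (¬ ∃ e ∈ K.edges, G.fst e = r ∧ G.snd e = r) ∧
    ∀ x p st, G.IsDitrail p x r → (∀ st' ∈ p, st'.1 ∈ K.edges) →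
      p.head? = some st → G.ssign st = α

/-- candidate for the linear ground: a linear `α`-semiradial with root `r`
all of whose non-root vertices are linear in `G`. -/
def Sub.IsLinearGroundCand (K : G.Sub) (α : Bool) (r : V) : Prop :=
  K.IsLinearSR α r ∧ ∀ v ∈ K.verts, v ≠ r → G.LinearVtx α r v

/-- candidate for the extended ground over the almost strong ground `H`. -/
def Sub.IsExtCand (H K : G.Sub) (α : Bool) (r : V) : Prop :=
  H.le K ∧ K.IsRadial α r ∧ ∀ v ∈ K.verts, v ∉ H.verts → G.SublinearVtx α r v

/-- the first shell of the extended ground `I` over the almost strong ground `H`: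
shell vertices having an `(α,!α)`-ditrail to `r` within `I` avoiding `V(H) \ {r}`. -/
def firstShell (H I : G.Sub) (α : Bool) (r : V) : Set V :=
  {x | x ∈ I.verts ∧ x ∉ H.verts ∧ G.ReachWA I.edges (H.verts \ {r}) α (!α) x r}

/-- adding new edges to `G`: each `f : F` becomes an edge between `a f` and `b f`
with signs `sa f` and `sb f` at these ends. -/
def addE (G : BG V) {F : Type} (a b : F → V) (sa sb : F → Bool) : BG V where
  E := G.E ⊕ F
  fst := Sum.elim G.fst a
  snd := Sum.elim G.snd b
  s1 := Sum.elim G.s1 sa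
  s2 := Sum.elim G.s2 sb

/-- deleting the edges in `D` from `G`. -/
def delE (G : BG V) (D : Set G.E) : BG V where
  E := {e : G.E // e ∉ D}
  fst e := G.fst e.1
  snd e := G.snd e.1
  s1 e := G.s1 e.1
  s2 e := G.s2 e.1

/-- contracting the vertex set `S` of `G` to the single vertex `r` (deleting the
edges lying within `S`, i.e. the arising loops). -/
noncomputable def contract (G : BG V) (S : Set V) (r : V) : BG V where
  E := {e : G.E // ¬(G.fst e ∈ S ∧ G.snd e ∈ S)}
  fst e := @ite _ (G.fst e.1 ∈ S) (Classical.propDecidable _) r (G.fst e.1)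
  snd e := @ite _ (G.snd e.1 ∈ S) (Classical.propDecidable _) r (G.snd e.1)
  s1 e := G.s1 e.1
  s2 e := G.s2 e.1

/-- a gluing sum `(G; s) ⊕ (H; T)`: every edge-end of `G` at `s` is redirected
to some vertex of `H` (given by `f1`, `f2`), keeping all signs. -/
noncomputable def glue {VG VH : Type} (G : BG VG) (H : BG VH) (s : VG)
    (f1 f2 : G.E → VH) : BG (VG ⊕ VH) where
  E := G.E ⊕ H.E
  fst := Sum.elim
    (fun e => @ite _ (G.fst e = s) (Classical.propDecidable _)
      (Sum.inr (f1 e)) (Sum.inl (G.fst e)))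
    (fun e => Sum.inr (H.fst e))
  snd := Sum.elim
    (fun e => @ite _ (G.snd e = s) (Classical.propDecidable _)
      (Sum.inr (f2 e)) (Sum.inl (G.snd e)))
    (fun e => Sum.inr (H.snd e))
  s1 := Sum.elim G.s1 H.s1
  s2 := Sum.elim G.s2 H.s2

/-- the copy of `H` inside a gluing sum, as a subgraph. -/
noncomputable def glueHcopy {VG VH : Type} (G : BG VG) (H : BG VH) (s : VG)
    (f1 f2 : G.E → VH) : (glue G H s f1 f2).Sub where
  verts := Set.range Sum.inr
  edges := Set.range Sum.inr
  fst_mem := by rintro _ ⟨e, rfl⟩; exact ⟨H.fst e, rfl⟩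
  snd_mem := by rintro _ ⟨e, rfl⟩; exact ⟨H.snd e, rfl⟩

end BG
namespace BG
variable {V : Type} {G : BG V}

/-- reversal of a step -/
def rev (G : BG V) (st : G.Step) : G.Step := (st.1, !st.2)

@[simp] lemma rev_fst (st : G.Step) : (G.rev st).1 = st.1 := rfl
@[simp] lemma src_rev (st : G.Step) : G.src (G.rev st) = G.tgt st := by
  rcases st with ⟨e, d⟩; cases d <;> simp [src, tgt, rev]
@[simp] lemma tgt_rev (st : G.Step) : G.tgt (G.rev st) = G.src st := by
  rcases st with ⟨e, d⟩; cases d <;> simp [src, tgt, rev]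
@[simp] lemma ssign_rev (st : G.Step) : G.ssign (G.rev st) = G.tsign st := by
  rcases st with ⟨e, d⟩; cases d <;> simp [ssign, tsign, rev]
@[simp] lemma tsign_rev (st : G.Step) : G.tsign (G.rev st) = G.ssign st := by
  rcases st with ⟨e, d⟩; cases d <;> simp [ssign, tsign, rev]

lemma IsDitrail.rev_ditrail {p : List G.Step} {a b : V} (h : G.IsDitrail p a b) :
    G.IsDitrail (p.reverse.map G.rev) b a := by
  obtain ⟨hn, hc, hh, hl, he⟩ := h
  refine ⟨?_, ?_, ?_, ?_, ?_⟩
  · have h1 : (p.reverse.map G.rev).map Prod.fst = (p.map Prod.fst).reverse := by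
      rw [List.map_map, ← List.map_reverse]
      rfl
    rw [h1]
    exact List.nodup_reverse.mpr hn
  · show List.IsChain _ _
    rw [List.isChain_map, List.isChain_reverse]
    refine (show List.IsChain _ _ from hc).imp ?_
    rintro s t ⟨h1, h2⟩
    refine ⟨by simp [h1], ?_⟩
    simp only [ssign_rev, tsign_rev]
    simp [h2]
  · intro st hst
    rw [List.head?_map, List.head?_reverse] at hst
    obtain ⟨lst, hlst, rfl⟩ := Option.map_eq_some_iff.mp hst
    simp [hl lst hlst]
  · intro st hst
    rw [List.getLast?_map, List.getLast?_reverse] at hst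
    obtain ⟨hd, hhd, rfl⟩ := Option.map_eq_some_iff.mp hst
    simp [hh hd hhd]
  · intro h
    simp only [List.map_eq_nil_iff, List.reverse_eq_nil_iff] at h
    exact (he h).symm

lemma IsDitrail.append_dt {p q : List G.Step} {a b c : V}
    (hp : G.IsDitrail p a b) (hq : G.IsDitrail q b c)
    (hpn : p ≠ []) (hqn : q ≠ [])
    (hdisj : ∀ f ∈ p.map Prod.fst, f ∉ q.map Prod.fst)
    (hsgn : ∀ s t, p.getLast? = some s → q.head? = some t → G.tsign s = !G.ssign t) :
    G.IsDitrail (p ++ q) a c := by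
  obtain ⟨hn1, hc1, hh1, hl1, -⟩ := hp
  obtain ⟨hn2, hc2, hh2, hl2, -⟩ := hq
  refine ⟨?_, ?_, ?_, ?_, fun h => absurd (List.append_eq_nil_iff.mp h).1 hpn⟩
  · rw [List.map_append]
    exact hn1.append hn2 (List.disjoint_left.mpr hdisj)
  · show List.IsChain _ _
    rw [List.isChain_append]
    refine ⟨hc1, hc2, ?_⟩
    intro s hs t ht
    rw [Option.mem_def] at hs ht
    exact ⟨(hl1 s hs).trans (hh2 t ht).symm, hsgn s t hs ht⟩
  · intro st hst
    apply hh1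
    rw [List.head?_append, List.head?_eq_head hpn] at hst
    rwa [List.head?_eq_head hpn]
  · intro st hst
    apply hl2
    rw [List.getLast?_append, List.getLast?_eq_getLast hqn, Option.some_or] at hst
    rwa [List.getLast?_eq_getLast hqn]

lemma IsDitrail.prefix_dt {p q : List G.Step} {a c : V}
    (h : G.IsDitrail (p ++ q) a c) (hpn : p ≠ []) :
    G.IsDitrail p a (G.tgt (p.getLast hpn)) := by
  obtain ⟨hn, hc, hh, hl, -⟩ := h
  refine ⟨?_, (List.isChain_append.mp hc).1, ?_, ?_, fun h => absurd h hpn⟩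
  · rw [List.map_append] at hn
    exact hn.of_append_left
  · intro st hst
    apply hh
    rw [List.head?_append, hst, Option.some_or]
  · intro st hst
    rw [List.getLast?_eq_getLast hpn, Option.some_inj] at hst
    rw [← hst]

lemma IsDitrail.suffix_dt {p q : List G.Step} {a c : V}
    (h : G.IsDitrail (p ++ q) a c) (hqn : q ≠ []) :
    G.IsDitrail q (G.src (q.head hqn)) c := by
  obtain ⟨hn, hc, hh, hl, -⟩ := h
  refine ⟨?_, (List.isChain_append.mp hc).2.1, ?_, ?_, fun h => absurd h hqn⟩
  · rw [List.map_append] at hn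
    exact hn.of_append_right
  · intro st hst
    rw [List.head?_eq_head hqn, Option.some_inj] at hst
    rw [← hst]
  · intro st hst
    apply hl
    rw [List.getLast?_append, hst, Option.some_or]

lemma reachWS_of {Es : Set G.E} {p : List G.Step} {x r : V} {σ : Bool}
    (hd : G.IsDitrail p x r) (hpn : p ≠ []) (hE : ∀ st ∈ p, st.1 ∈ Es)
    (hσ : ∀ st, p.head? = some st → G.ssign st = σ) :
    G.ReachWS Es σ x r := by
  refine ⟨G.tsign (p.getLast hpn), p, hd, hE, Set.notMem_empty x,
    fun st _ => Set.notMem_empty _, ?_, ?_⟩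
  · rw [List.head?_eq_head hpn]
    simp [hσ _ (List.head?_eq_head hpn)]
  · rw [List.getLast?_eq_getLast hpn]
    rfl

lemma reachWS_mono {Es Es' : Set G.E} {σ : Bool} {x r : V} (hsub : Es ⊆ Es')
    (h : G.ReachWS Es σ x r) : G.ReachWS Es' σ x r := by
  obtain ⟨β, p, h1, h2, h3, h4, h5, h6⟩ := h
  exact ⟨β, p, h1, fun st hst => hsub (h2 st hst), h3, h4, h5, h6⟩

lemma extend_into {Es : Set G.E} {H : G.Sub} {r x u : V} {σ : Bool}
    (habs : H.IsAbsolute r) (hHE : H.edges ⊆ Es)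
    {q : List G.Step} (hqn : q ≠ []) (hd : G.IsDitrail q x u) (hu : u ∈ H.verts)
    (hE : ∀ st ∈ q, st.1 ∈ Es ∧ st.1 ∉ H.edges)
    (hσ : ∀ st, q.head? = some st → G.ssign st = σ) :
    G.ReachWS Es σ x r := by
  obtain ⟨β, pH, hdH, hEH, -, -, hsH, -⟩ := (habs (!(G.tsign (q.getLast hqn)))).2 u hu
  by_cases hpe : pH = []
  · subst hpe
    have hur : u = r := hdH.2.2.2.2 rfl
    subst hur
    exact reachWS_of hd hqn (fun st h => (hE st h).1) hσ
  · have hsH' : G.ssign (pH.head hpe) = !(G.tsign (q.getLast hqn)) := by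
      rwa [List.head?_eq_head hpe, Option.map_some, Option.getD_some] at hsH
    have hdisj : ∀ f ∈ q.map Prod.fst, f ∉ pH.map Prod.fst := by
      intro f hf hf2
      simp only [List.mem_map] at hf hf2
      obtain ⟨st, hst, rfl⟩ := hf
      obtain ⟨st2, hst2, he2⟩ := hf2
      exact (hE st hst).2 (he2 ▸ hEH st2 hst2)
    have hall : G.IsDitrail (q ++ pH) x r := by
      refine hd.append_dt hdH hqn hpe hdisj ?_
      intro s t hs ht
      rw [List.getLast?_eq_getLast hqn, Option.some_inj] at hs
      rw [List.head?_eq_head hpe, Option.some_inj] at ht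
      subst hs
      subst ht
      simp [hsH']
    refine reachWS_of hall (fun h => hqn (List.append_eq_nil_iff.mp h).1) ?_ ?_
    · intro st hst
      rcases List.mem_append.mp hst with h | h
      · exact (hE st h).1
      · exact hHE (hEH st h)
    · intro st hst
      apply hσ
      rw [List.head?_append, List.head?_eq_head hqn, Option.some_or] at hst
      rwa [List.head?_eq_head hqn]

lemma first_hit {S : Set V} :
    ∀ (p : List G.Step), p ≠ [] → (∀ st, p.getLast? = some st → G.tgt st ∈ S) →
    ∃ q s, p = q ++ s ∧ q ≠ [] ∧ (∀ st, q.getLast? = some st → G.tgt st ∈ S) ∧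
      ∀ st ∈ q.dropLast, G.tgt st ∉ S := by
  intro p
  induction p with
  | nil => simp
  | cons a l ih =>
    intro _ hlast
    by_cases ha : G.tgt a ∈ S
    · refine ⟨[a], l, rfl, by simp, ?_, by simp⟩
      intro st hst
      simp only [List.getLast?_singleton, Option.some_inj] at hst
      rwa [← hst]
    · have hl : l ≠ [] := by
        rintro rfl
        exact ha (hlast a rfl)
      obtain ⟨q, s, hdec, hqn, hql, hqint⟩ := ih hl (by
        intro st hst
        apply hlast
        cases l with
        | nil => exact absurd rfl hl
        | cons b l' => rwa [List.getLast?_cons_cons])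
      refine ⟨a :: q, s, by simp [hdec], by simp, ?_, ?_⟩
      · intro st hst
        apply hql
        cases q with
        | nil => exact absurd rfl hqn
        | cons b l' => rwa [List.getLast?_cons_cons] at hst
      · rw [List.dropLast_cons_of_ne_nil hqn]
        intro st hst
        rcases List.mem_cons.mp hst with rfl | hst
        · exact ha
        · exact hqint st hst

lemma srcs_not_mem {S : Set V} :
    ∀ (l : List G.Step) (a : V),
      List.Chain' (fun s t => G.tgt s = G.src t ∧ G.tsign s = !G.ssign t) l →
      (∀ st, l.head? = some st → G.src st = a) → a ∉ S →
      (∀ st ∈ l.dropLast, G.tgt st ∉ S) →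
      ∀ st ∈ l, G.src st ∉ S := by
  intro l
  induction l with
  | nil => simp
  | cons b l ih =>
    intro a hc hh ha hint st hst
    rcases List.mem_cons.mp hst with rfl | hst
    · rw [hh st rfl]
      exact ha
    · cases l with
      | nil => simp at hst
      | cons c l' =>
        have hrel := (List.isChain_cons_cons.mp hc).1
        have hbt : G.tgt b ∉ S := by
          apply hint b
          rw [List.dropLast_cons_of_ne_nil (by simp : (c :: l') ≠ [])]
          exact List.mem_cons_self
        refine ih (G.tgt b) (show List.IsChain _ _ from hc).tail ?_ hbt ?_ st hst
        · intro st' hst'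
          rw [List.head?_cons, Option.some_inj] at hst'
          rw [← hst']
          exact hrel.1.symm
        · intro st' hst'
          apply hint st'
          rw [List.dropLast_cons_of_ne_nil (by simp : (c :: l') ≠ [])]
          exact List.mem_cons_of_mem _ hst'

lemma next_of_mem_dropLast {R : G.Step → G.Step → Prop} :
    ∀ (l : List G.Step), List.Chain' R l → ∀ st ∈ l.dropLast, ∃ t ∈ l, R st t := by
  intro l
  induction l with
  | nil => simp
  | cons a l ih =>
    intro hc st hst
    cases l with
    | nil => simp at hst
    | cons b l' =>
      rw [List.dropLast_cons_of_ne_nil (by simp : (b :: l') ≠ [])] at hst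
      rcases List.mem_cons.mp hst with rfl | hst
      · exact ⟨b, by simp, (List.isChain_cons_cons.mp hc).1⟩
      · obtain ⟨t, ht, hr⟩ := ih (show List.IsChain _ _ from hc).tail st hst
        exact ⟨t, List.mem_cons_of_mem _ ht, hr⟩

end BG

theorem stmt8 {V : Type} {G : BG V} (α : Bool) (r : V)
    (hG : G.IsSemiradial α r)
    (H : G.Sub) (hH : H.IsAbsolute r)
    (hmax : ∀ K : G.Sub, K.IsAbsolute r → K.le H) :
    ∀ x, x ∉ H.verts → (∃ u ∈ H.verts, G.Adj x u) → G.LinearVtx α r x := by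
  intro x hx hadj
  obtain ⟨u, hu, e, he⟩ := hadj
  have hrH : r ∈ H.verts := (hH true).1
  refine ⟨hG x, fun hcon => ?_⟩
  obtain ⟨d0, hsrc0, htgt0⟩ : ∃ d, G.src (e, d) = x ∧ G.tgt (e, d) = u := by
    rcases he with ⟨h1, h2⟩ | ⟨h1, h2⟩
    · exact ⟨true, by simp [BG.src, h1], by simp [BG.tgt, h2]⟩
    · exact ⟨false, by simp [BG.src, h2], by simp [BG.tgt, h1]⟩
  obtain ⟨γ, hγ⟩ : ∃ g, g = G.ssign (e, d0) := ⟨_, rfl⟩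
  have hreach : G.ReachS (!γ) x r := by
    by_cases hga : γ = α
    · rw [hga]; exact hcon
    · have hga' : γ = !α := by cases γ <;> cases α <;> simp_all
      rw [hga', Bool.not_not]; exact hG x
  obtain ⟨β, p, hdp, -, -, -, hsp, -⟩ := hreach
  have hpn : p ≠ [] := by
    rintro rfl
    exact hx (by rw [hdp.2.2.2.2 rfl]; exact hrH)
  obtain ⟨q, s, hdec, hqn, hql, hqint⟩ :=
    BG.first_hit p hpn (fun st hst => by rw [hdp.2.2.2.1 st hst]; exact hrH)
  rw [hdec] at hdp
  have hdq : G.IsDitrail q x (G.tgt (q.getLast hqn)) := hdp.prefix_dt hqn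
  set w := G.tgt (q.getLast hqn) with hw
  have hwH : w ∈ H.verts := hql _ (List.getLast?_eq_getLast hqn)
  have hσq : ∀ st, q.head? = some st → G.ssign st = !γ := by
    intro st hst
    have hph : p.head? = some st := by
      rw [hdec, List.head?_append, hst, Option.some_or]
    rw [hph, Option.map_some, Option.getD_some] at hsp
    exact hsp
  have hsrcq : ∀ st ∈ q, G.src st ∉ H.verts :=
    BG.srcs_not_mem q x hdq.2.1 hdq.2.2.1 hx hqint
  have hqE : ∀ st ∈ q, st.1 ∉ H.edges := by
    intro st hst hmem
    obtain ⟨e', d⟩ := st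
    have h1 := H.fst_mem e' hmem
    have h2 := H.snd_mem e' hmem
    cases d
    · exact hsrcq _ hst (by simpa [BG.src] using h2)
    · exact hsrcq _ hst (by simpa [BG.src] using h1)
  have heH : e ∉ H.edges := by
    intro hmem
    rcases he with ⟨h1, -⟩ | ⟨-, h2⟩
    · exact hx (h1 ▸ H.fst_mem e hmem)
    · exact hx (h2 ▸ H.snd_mem e hmem)
  have he_step : ∀ st ∈ q, st.1 = e → G.tgt st ∈ H.verts := by
    intro st hst hse
    obtain ⟨e', d⟩ := st
    have hse' : e' = e := hse
    subst hse'
    have hsrc := hsrcq _ hst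
    rcases he with ⟨h1, h2⟩ | ⟨h1, h2⟩
    · cases d
      · exact absurd (by rw [show G.src (e', false) = G.snd e' from rfl, h2]; exact hu) hsrc
      · rw [show G.tgt (e', true) = G.snd e' from rfl, h2]; exact hu
    · cases d
      · rw [show G.tgt (e', false) = G.fst e' from rfl, h1]; exact hu
      · exact absurd (by rw [show G.src (e', true) = G.fst e' from rfl, h1]; exact hu) hsrc
  have he_pre : ∀ q₁ st q₂, q = q₁ ++ st :: q₂ → ∀ st' ∈ q₁, st'.1 ≠ e := by
    intro q₁ st q₂ hq st' hst' h1
    have htH : G.tgt st' ∈ H.verts :=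
      he_step st' (by rw [hq]; exact List.mem_append_left _ hst') h1
    have hdl : st' ∈ q.dropLast := by
      rw [hq, List.dropLast_append_of_ne_nil (List.cons_ne_nil st q₂)]
      exact List.mem_append_left _ hst'
    exact hqint st' hdl htH
  set Es : Set G.E := {f | f ∈ H.edges ∨ f = e ∨ ∃ st ∈ q, st.1 = f} with hEs
  have hHEs : H.edges ⊆ Es := fun f hf => Or.inl hf
  have heEs : e ∈ Es := Or.inr (Or.inl rfl)
  have hqEs : ∀ st ∈ q, st.1 ∈ Es := fun st hst => Or.inr (Or.inr ⟨st, hst, rfl⟩)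
  set Vs : Set V :=
    {v | v ∈ H.verts ∨ v = x ∨ (∃ st ∈ q, G.src st = v) ∨ ∃ st ∈ q, G.tgt st = v} with hVs
  have hd0 : G.IsDitrail [(e, d0)] x u := by
    refine ⟨by simp, List.isChain_singleton _, ?_, ?_, by simp⟩
    · intro st hst
      rw [List.head?_cons, Option.some_inj] at hst
      rw [← hst]; exact hsrc0
    · intro st hst
      simp only [List.getLast?_singleton, Option.some_inj] at hst
      rw [← hst]; exact htgt0
  have key : ∀ st ∈ q, ∀ β' : Bool, G.ReachWS Es β' (G.src st) r := by
    intro st hst β'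
    obtain ⟨q₁, q₂, hq12⟩ := List.append_of_mem hst
    rw [hq12] at hdq
    have hsuf : G.IsDitrail (st :: q₂) (G.src ((st :: q₂).head (by simp))) w :=
      hdq.suffix_dt (by simp)
    rw [List.head_cons] at hsuf
    have hfwd : G.ReachWS Es (G.ssign st) (G.src st) r := by
      refine BG.extend_into hH hHEs (by simp) hsuf hwH ?_ ?_
      · intro st' hst'
        have hq' : st' ∈ q := by rw [hq12]; exact List.mem_append_right _ hst'
        exact ⟨hqEs st' hq', hqE st' hq'⟩
      · intro st' hst'
        rw [List.head?_cons, Option.some_inj] at hst'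
        rw [← hst']
    have hbwd : G.ReachWS Es (!(G.ssign st)) (G.src st) r := by
      rcases eq_or_ne q₁ [] with rfl | hq1n
      · have hxst : G.src st = x := by
          have hh : q.head? = some st := by rw [hq12]; rfl
          exact hdq.2.2.1 st (by rw [hq12] at hh; exact hh)
        have hsst : G.ssign st = !γ := hσq st (by rw [hq12]; rfl)
        rw [hxst, hsst, Bool.not_not]
        refine BG.extend_into hH hHEs (by simp) hd0 hu ?_ ?_
        · intro st' hst'
          rw [List.mem_singleton] at hst'
          rw [hst']
          exact ⟨heEs, heH⟩
        · intro st' hst'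
          rw [List.head?_cons, Option.some_inj] at hst'
          rw [← hst']
          exact hγ.symm
      · have hq1r : (q₁.reverse.map G.rev) ≠ [] := by simp [hq1n]
        obtain ⟨hjt, hjs⟩ : G.tgt (q₁.getLast hq1n) = G.src st ∧
            G.tsign (q₁.getLast hq1n) = !(G.ssign st) :=
          (List.isChain_append.mp hdq.2.1).2.2 _ (List.getLast?_eq_getLast hq1n) st rfl
        have hdq₁ : G.IsDitrail q₁ x (G.src st) := by
          have hpre := hdq.prefix_dt hq1n
          rwa [hjt] at hpre
        have hdrev : G.IsDitrail (q₁.reverse.map G.rev) (G.src st) x := hdq₁.rev_ditrail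
        have hdback : G.IsDitrail (q₁.reverse.map G.rev ++ [(e, d0)]) (G.src st) u := by
          refine hdrev.append_dt hd0 hq1r (by simp) ?_ ?_
          · intro f hf hf2
            rw [List.map_map] at hf
            have hf' : f ∈ (q₁.reverse).map Prod.fst := hf
            rw [List.mem_map] at hf'
            obtain ⟨st', hst', rfl⟩ := hf'
            rw [List.mem_reverse] at hst'
            have hfe : st'.1 = e := by simpa using hf2
            exact he_pre q₁ st q₂ hq12 st' hst' hfe
          · intro s' t' hs' ht'
            rw [List.getLast?_map, List.getLast?_reverse, List.head?_eq_head hq1n,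
              Option.map_some, Option.some_inj] at hs'
            rw [List.head?_cons, Option.some_inj] at ht'
            rw [← hs', ← ht', BG.tsign_rev]
            have hqh : q.head? = some (q₁.head hq1n) := by
              rw [hq12, List.head?_append, List.head?_eq_head hq1n, Option.some_or]
            rw [hσq _ hqh, hγ]
        refine BG.extend_into hH hHEs
          (by simp : q₁.reverse.map G.rev ++ [(e, d0)] ≠ []) hdback hu ?_ ?_
        · intro st' hst'
          rcases List.mem_append.mp hst' with h | h
          · rw [List.mem_map] at h
            obtain ⟨st'', hst'', rfl⟩ := h
            rw [List.mem_reverse] at hst''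
            have hstq : st'' ∈ q := by rw [hq12]; exact List.mem_append_left _ hst''
            exact ⟨hqEs st'' hstq, hqE st'' hstq⟩
          · rw [List.mem_singleton] at h
            rw [h]
            exact ⟨heEs, heH⟩
        · intro st' hst'
          rw [List.head?_append, List.head?_map, List.head?_reverse,
            List.getLast?_eq_getLast hq1n, Option.map_some, Option.some_or,
            Option.some_inj] at hst'
          rw [← hst', BG.ssign_rev]
          exact hjs
    rcases (by cases β' <;> cases G.ssign st <;> simp :
        β' = G.ssign st ∨ β' = !(G.ssign st)) with hb | hb
    · rw [hb]; exact hfwd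
    · rw [hb]; exact hbwd
  have hKmem : ∀ f ∈ Es, G.fst f ∈ Vs ∧ G.snd f ∈ Vs := by
    intro f hf
    rcases hf with hf | rfl | ⟨st, hst, rfl⟩
    · exact ⟨Or.inl (H.fst_mem f hf), Or.inl (H.snd_mem f hf)⟩
    · rcases he with ⟨h1, h2⟩ | ⟨h1, h2⟩
      · exact ⟨by rw [h1]; exact Or.inr (Or.inl rfl), by rw [h2]; exact Or.inl hu⟩
      · exact ⟨by rw [h1]; exact Or.inl hu, by rw [h2]; exact Or.inr (Or.inl rfl)⟩
    · obtain ⟨e', d⟩ := st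
      cases d
      · exact ⟨Or.inr (Or.inr (Or.inr ⟨(e', false), hst, rfl⟩)),
          Or.inr (Or.inr (Or.inl ⟨(e', false), hst, rfl⟩))⟩
      · exact ⟨Or.inr (Or.inr (Or.inl ⟨(e', true), hst, rfl⟩)),
          Or.inr (Or.inr (Or.inr ⟨(e', true), hst, rfl⟩))⟩
  have hKabs : (⟨Vs, Es, fun f hf => (hKmem f hf).1, fun f hf => (hKmem f hf).2⟩ :
      G.Sub).IsAbsolute r := by
    intro β'
    refine ⟨Or.inl hrH, ?_⟩
    intro v hv
    rcases hv with hvH | rfl | ⟨st, hst, rfl⟩ | ⟨st, hst, rfl⟩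
    · exact BG.reachWS_mono hHEs ((hH β').2 v hvH)
    · have hhd := hdq.2.2.1 (q.head hqn) (List.head?_eq_head hqn)
      rw [← hhd]
      exact key _ (List.head_mem hqn) β'
    · exact key st hst β'
    · by_cases hlast : st ∈ q.dropLast
      · obtain ⟨t, ht, hrel⟩ := BG.next_of_mem_dropLast q hdq.2.1 st hlast
        rw [hrel.1]
        exact key t ht β'
      · have hstl : st = q.getLast hqn := by
          have hsplit := List.dropLast_append_getLast hqn
          have hst2 : st ∈ q.dropLast ++ [q.getLast hqn] := by rw [hsplit]; exact hst
          rcases List.mem_append.mp hst2 with h | h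
          · exact absurd h hlast
          · exact List.mem_singleton.mp h
        rw [hstl, ← hw]
        exact BG.reachWS_mono hHEs ((hH β').2 _ hwH)
  exact hx ((hmax _ hKabs).1 (Or.inr (Or.inl rfl)))
end

section
/- Let α ∈ {+,−} and let G be an α-radial with strong root r (i.e., r is strong in G). Let H be the strong ground of G. Then every vertex of V(G)∖V(H) adjacent to V(H) is sublinear in G, i.e., it has an (α,−α)-ditrail to r but no (−α,−α)-ditrail to r. -/
namespace BG
variable {V : Type} {G : BG V}

lemma flip_src (st : G.Step) : G.src (st.1, !st.2) = G.tgt st := by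
  rcases st with ⟨e, b⟩; cases b <;> simp [src, tgt]
lemma flip_tgt (st : G.Step) : G.tgt (st.1, !st.2) = G.src st := by
  rcases st with ⟨e, b⟩; cases b <;> simp [src, tgt]
lemma flip_ssign (st : G.Step) : G.ssign (st.1, !st.2) = G.tsign st := by
  rcases st with ⟨e, b⟩; cases b <;> simp [ssign, tsign]
lemma flip_tsign (st : G.Step) : G.tsign (st.1, !st.2) = G.ssign st := by
  rcases st with ⟨e, b⟩; cases b <;> simp [ssign, tsign]

lemma step_endpoints (st : G.Step) :
    (G.src st = G.fst st.1 ∧ G.tgt st = G.snd st.1) ∨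
    (G.src st = G.snd st.1 ∧ G.tgt st = G.fst st.1) := by
  rcases st with ⟨e, b⟩; cases b <;> simp [src, tgt]

lemma IsDitrail.append {p q : List G.Step} {x y z : V}
    (hp : G.IsDitrail p x y) (hq : G.IsDitrail q y z)
    (hd : ∀ st ∈ p, ∀ st' ∈ q, st.1 ≠ st'.1)
    (hj : ∀ a b, p.getLast? = some a → q.head? = some b → G.tsign a = !G.ssign b) :
    G.IsDitrail (p ++ q) x z := by
  obtain ⟨hn1, hc1, hh1, hl1, he1⟩ := hp
  obtain ⟨hn2, hc2, hh2, hl2, he2⟩ := hq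
  refine ⟨?_, ?_, ?_, ?_, ?_⟩
  · rw [List.map_append]
    refine List.nodup_append'.mpr ⟨hn1, hn2, ?_⟩
    intro a ha hb
    simp only [List.mem_map] at ha hb
    obtain ⟨sa, hsa, rfl⟩ := ha
    obtain ⟨sb, hsb, hsb'⟩ := hb
    exact hd sa hsa sb hsb hsb'.symm
  · apply List.isChain_append.mpr
    refine ⟨hc1, hc2, ?_⟩
    intro a ha b hb
    rw [Option.mem_def] at ha hb
    exact ⟨(hl1 a ha).trans (hh2 b hb).symm, hj a b ha hb⟩
  · intro st hst
    rcases p with _ | ⟨a, p'⟩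
    · simp only [List.nil_append] at hst
      exact (hh2 st hst).trans (he1 rfl).symm
    · simp only [List.cons_append, List.head?_cons, Option.some.injEq] at hst
      exact hst ▸ hh1 a rfl
  · intro st hst
    rcases hq' : q with _ | ⟨b, q'⟩
    · subst hq'
      simp only [List.append_nil] at hst
      exact (hl1 st hst).trans (he2 rfl)
    · subst hq'
      have hqne : (b :: q') ≠ [] := by simp
      have hql := List.getLast?_eq_getLast hqne
      rw [List.getLast?_append, hql] at hst
      simp only [Option.or, Option.some.injEq] at hst
      subst hst
      exact hl2 _ hql
  · intro h
    rw [List.append_eq_nil_iff] at h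
    exact (he1 h.1).trans (he2 h.2)

lemma IsDitrail.reverse {p : List G.Step} {x y : V} (hp : G.IsDitrail p x y) :
    G.IsDitrail (p.reverse.map fun st => (st.1, !st.2)) y x := by
  obtain ⟨hn, hc, hh, hl, he⟩ := hp
  refine ⟨?_, ?_, ?_, ?_, ?_⟩
  · have : ((p.reverse.map fun st : G.Step => (st.1, !st.2)).map Prod.fst)
        = (p.map Prod.fst).reverse := by
      rw [List.map_map, List.map_reverse]; rfl
    rw [this]; exact List.nodup_reverse.mpr hn
  · apply (List.isChain_map _).mpr; apply List.isChain_reverse.mpr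
    refine List.IsChain.imp ?_ hc
    intro a b ⟨h1, h2⟩
    refine ⟨by rw [flip_tgt, flip_src]; exact h1.symm, ?_⟩
    rw [flip_tsign, flip_ssign, h2, Bool.not_not]
  · intro st hst
    rw [List.head?_map, List.head?_reverse] at hst
    rcases hlp : p.getLast? with _ | a
    · rw [hlp] at hst; simp at hst
    · rw [hlp] at hst; simp only [Option.map_some, Option.some.injEq] at hst
      rw [← hst, flip_src]; exact hl a hlp
  · intro st hst
    rw [List.getLast?_map, List.getLast?_reverse] at hst
    rcases hhp : p.head? with _ | a
    · rw [hhp] at hst; simp at hst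
    · rw [hhp] at hst; simp only [Option.map_some, Option.some.injEq] at hst
      rw [← hst, flip_tgt]; exact hh a hhp
  · intro h
    simp only [List.map_eq_nil_iff, List.reverse_eq_nil_iff] at h
    exact (he h).symm

lemma ditrail_prefix {p1 p2 : List G.Step} {x y : V}
    (hp : G.IsDitrail (p1 ++ p2) x y) {a : G.Step} (ha : p1.getLast? = some a) :
    G.IsDitrail p1 x (G.tgt a) := by
  obtain ⟨hn, hc, hh, hl, he⟩ := hp
  have h1 : p1 ≠ [] := by rintro rfl; simp at ha
  refine ⟨?_, ?_, ?_, ?_, fun h => absurd h h1⟩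
  · rw [List.map_append] at hn; exact (List.nodup_append.mp hn).1
  · exact (List.isChain_append.mp hc).1
  · intro st hst
    apply hh
    rcases p1 with _ | ⟨b, p1'⟩
    · simp at hst
    · simp only [List.head?_cons, Option.some.injEq] at hst
      simp [hst]
  · intro st hst
    rw [ha] at hst; simp at hst; rw [hst]

lemma ditrail_suffix {p1 p2 : List G.Step} {x y : V}
    (hp : G.IsDitrail (p1 ++ p2) x y) {a b : G.Step}
    (ha : p1.getLast? = some a) (hb : p2.head? = some b) :
    G.IsDitrail p2 (G.tgt a) y ∧ G.tsign a = !G.ssign b := by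
  obtain ⟨hn, hc, hh, hl, he⟩ := hp
  have h2 : p2 ≠ [] := by rintro rfl; simp at hb
  have hjun := (List.isChain_append.mp hc).2.2 a (Option.mem_def.mpr ha) b (Option.mem_def.mpr hb)
  refine ⟨⟨?_, ?_, ?_, ?_, fun h => absurd h h2⟩, hjun.2⟩
  · rw [List.map_append] at hn; exact (List.nodup_append.mp hn).2.1
  · exact (List.isChain_append.mp hc).2.1
  · intro st hst
    rw [hb] at hst
    simp only [Option.some.injEq] at hst
    subst hst
    exact hjun.1.symm
  · intro st hst
    apply hl
    rw [List.getLast?_append, hst]; rfl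

lemma chain_srcs {p : List G.Step} :
    ∀ {x : V}, List.Chain' (fun a b => G.tgt a = G.src b ∧ G.tsign a = !G.ssign b) p →
    (∀ st, p.head? = some st → G.src st = x) →
    ∀ st ∈ p, G.src st = x ∨ ∃ st' ∈ p.dropLast, G.tgt st' = G.src st := by
  induction p with
  | nil => simp
  | cons a p' ih =>
    intro x hc hh st hst
    rw [List.mem_cons] at hst
    rcases hst with rfl | hst
    · left; exact hh st rfl
    · have hc' := List.isChain_cons.mp hc
      have hne : p' ≠ [] := List.ne_nil_of_mem hst
      have := ih hc'.2 (x := G.tgt a)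
        (fun st' hst' => (hc'.1 st' (Option.mem_def.mpr hst')).1.symm) st hst
      rw [List.dropLast_cons_of_ne_nil hne]
      rcases this with h | ⟨st', hst'2, h⟩
      · exact Or.inr ⟨a, List.mem_cons_self, h.symm⟩
      · exact Or.inr ⟨st', List.mem_cons_of_mem a hst'2, h⟩

lemma ditrail_srcs {p : List G.Step} {x y : V} (hp : G.IsDitrail p x y) :
    ∀ st ∈ p, G.src st = x ∨ ∃ st' ∈ p.dropLast, G.tgt st' = G.src st :=
  chain_srcs hp.2.1 hp.2.2.1


lemma ReachW_mono {Es Es' : Set G.E} (h : Es ⊆ Es') {σ β : Bool} {x y : V}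
    (hr : G.ReachW Es σ β x y) : G.ReachW Es' σ β x y := by
  obtain ⟨p, hp, hE, h1, h2, h3, h4⟩ := hr
  exact ⟨p, hp, fun st hst => h (hE st hst), h1, h2, h3, h4⟩

lemma toRoot {α : Bool} {r : V} {H : G.Sub} (hH : H.IsStrong α r) {Es : Set G.E}
    (hHE : H.edges ⊆ Es) {p : List G.Step} {m w : V} {σ : Bool}
    (hp : G.IsDitrail p m w) (hne : p ≠ []) (hw : w ∈ H.verts)
    (hpE : ∀ st ∈ p, st.1 ∈ Es) (hdisj : ∀ st ∈ p, st.1 ∉ H.edges)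
    (hσ : ∀ st, p.head? = some st → G.ssign st = σ) :
    G.ReachW Es σ (!α) m r := by
  have ha : p.getLast? = some (p.getLast hne) := List.getLast?_eq_getLast hne
  set a := p.getLast hne with ha'
  have hBoth : G.ReachW H.edges (!(G.tsign a)) (!α) w r := by
    by_cases h : G.tsign a = α
    · rw [h]; exact hH.2 w hw
    · have h2 : G.tsign a = !α := by cases α <;> cases htsa : G.tsign a <;> simp_all
      rw [h2, Bool.not_not]; exact hH.1.2 w hw
  obtain ⟨D, hD, hDE, -, -, hDh, hDl⟩ := hBoth
  refine ⟨p ++ D, ?_, ?_, Set.notMem_empty m, fun st _ => Set.notMem_empty _, ?_, ?_⟩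
  · apply hp.append hD
    · intro st hst st' hst' h
      exact hdisj st hst (h ▸ hDE st' hst')
    · intro a' b ha2 hb
      have haa : a' = a := by rw [ha] at ha2; exact (Option.some.inj ha2).symm
      rw [hb] at hDh
      simp only [Option.map_some, Option.getD_some] at hDh
      rw [haa, hDh, Bool.not_not]
  · intro st hst
    rcases List.mem_append.mp hst with h | h
    · exact hpE st h
    · exact hHE (hDE st h)
  · have hpd : (p ++ D).head? = p.head? := by
      rcases p with _ | ⟨c, p'⟩
      · exact absurd rfl hne
      · simp
    rw [hpd]
    rcases hph : p.head? with _ | c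
    · rcases p with _ | _
      · exact absurd rfl hne
      · simp at hph
    · simp only [Option.map_some, Option.getD_some]; exact hσ c hph
  · rcases hDn : D with _ | ⟨d, D'⟩
    · subst hDn
      simp only [List.append_nil]
      rw [ha]
      simp only [Option.map_some, Option.getD_some]
      simp only [Option.map_none, Option.getD_none, Bool.not_not] at hDh
      cases α <;> cases htsa : G.tsign a <;> simp_all
    · have hDne : D ≠ [] := by rw [hDn]; simp
      rw [← hDn] at *
      rw [List.getLast?_append, List.getLast?_eq_getLast hDne]
      rw [List.getLast?_eq_getLast hDne] at hDl
      simp only [Option.or, Option.map_some, Option.getD_some] at hDl ⊢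
      exact hDl


lemma bothSigns {Es : Set G.E} {v r : V} {α : Bool} (τ : Bool)
    (h1 : G.ReachW Es τ (!α) v r) (h2 : G.ReachW Es (!τ) (!α) v r) :
    G.ReachW Es α (!α) v r ∧ G.ReachW Es (!α) (!α) v r := by
  cases α <;> cases τ <;> simp_all


lemma take_getLast? {A : Type*} {l : List A} {n : ℕ} (h : n < l.length) :
    (l.take (n+1)).getLast? = some l[n] := by
  rw [List.getLast?_eq_getElem?, List.length_take]
  have h2 : (n+1) ⊓ l.length - 1 = n := by omega
  rw [h2, List.getElem?_take]
  simp [List.getElem?_eq_getElem h]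

lemma take_head? {A : Type*} (l : List A) {n : ℕ} (h : 0 < n) : (l.take n).head? = l.head? := by
  rw [List.head?_eq_getElem?, List.head?_eq_getElem?, List.getElem?_take]
  simp [h]

lemma append_head? {A : Type*} {l : List A} (l' : List A) (h : l ≠ []) :
    (l ++ l').head? = l.head? := by
  rcases l with _ | ⟨a, l⟩
  · exact absurd rfl h
  · simp

lemma main_aux {α : Bool} {r : V} {H : G.Sub} (hH : H.IsStrong α r)
    (hmax : ∀ K : G.Sub, K.IsStrong α r → K.le H)
    {x u : V} (hx : x ∉ H.verts) (hu : u ∈ H.verts)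
    (stE : G.Step) (hsrcE : G.src stE = x) (htgtE : G.tgt stE = u)
    {R : List G.Step} (hR : G.IsDitrail R x r)
    (hhead : ∀ st, R.head? = some st → G.ssign st = !(G.ssign stE)) : False := by
  classical
  have hrH : r ∈ H.verts := hH.1.1
  have hxr : x ≠ r := fun h => hx (h ▸ hrH)
  have hRne : R ≠ [] := fun h => hxr (hR.2.2.2.2 h)
  have hRlen : 0 < R.length := List.length_pos_iff.mpr hRne
  have hex : ∃ n, ∃ h : n < R.length, G.tgt R[n] ∈ H.verts := by
    refine ⟨R.length - 1, by omega, ?_⟩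
    have hlast : R.getLast? = some (R[R.length - 1]'(by omega)) := by
      rw [List.getLast?_eq_getElem?, List.getElem?_eq_getElem (by omega)]
    rw [hR.2.2.2.1 _ hlast]
    exact hrH
  set i := Nat.find hex with hidef
  obtain ⟨hi, hiH⟩ := Nat.find_spec hex
  have hmin : ∀ j, j < i → ∀ hj : j < R.length, G.tgt R[j] ∉ H.verts :=
    fun j hji hj hmem => Nat.find_min hex hji ⟨hj, hmem⟩
  set q := R.take (i+1) with hqdef
  have hql : q.length = i + 1 := by rw [hqdef, List.length_take]; omega
  have hqne : q ≠ [] := by intro h; rw [h] at hql; simp at hql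
  have hqj : ∀ j, j < i + 1 → ∀ (h1 : j < q.length) (h2 : j < R.length), q[j] = R[j] :=
    fun j hj h1 h2 => List.getElem_take
  have hqlast : q.getLast? = some (R[i]) := take_getLast? hi
  set w := G.tgt (R[i]'hi) with hwdef
  have hwH : w ∈ H.verts := hiH
  have hqdit : G.IsDitrail q x w := by
    have h2 : G.IsDitrail (q ++ R.drop (i+1)) x r := by
      rw [hqdef, List.take_append_drop]; exact hR
    exact ditrail_prefix h2 hqlast
  have hqhead : q.head? = R.head? := take_head? R (by omega)
  have hqdrop : ∀ st ∈ q.dropLast, G.tgt st ∉ H.verts := by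
    intro st hst
    obtain ⟨j, hj, hjeq⟩ := List.mem_iff_getElem.mp hst
    have hjl : j < i := by rw [List.length_dropLast, hql] at hj; omega
    have hst' : st = R[j]'(by omega) := by
      rw [← hjeq, List.getElem_dropLast, hqj j (by omega) _ (by omega)]
    rw [hst']
    exact hmin j hjl (by omega)
  have hqsrc : ∀ st ∈ q, G.src st ∉ H.verts := by
    intro st hst hmem
    rcases ditrail_srcs hqdit st hst with h | ⟨st', hst', h⟩
    · exact hx (h ▸ hmem)
    · exact hqdrop st' hst' (h.symm ▸ hmem)
  have hqEnotH : ∀ st ∈ q, st.1 ∉ H.edges := by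
    intro st hst hmem
    rcases step_endpoints st with ⟨h1, _⟩ | ⟨h1, _⟩
    · exact hqsrc st hst (by rw [h1]; exact H.fst_mem _ hmem)
    · exact hqsrc st hst (by rw [h1]; exact H.snd_mem _ hmem)
  have heEnotH : stE.1 ∉ H.edges := by
    intro hmem
    rcases step_endpoints stE with ⟨h1, _⟩ | ⟨h1, _⟩
    · exact hx (by rw [← hsrcE, h1]; exact H.fst_mem _ hmem)
    · exact hx (by rw [← hsrcE, h1]; exact H.snd_mem _ hmem)
  have heEnotq : ∀ st ∈ q.dropLast, st.1 ≠ stE.1 := by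
    intro st hst heq
    have hstq : st ∈ q := (List.dropLast_sublist q).mem hst
    have hu' : u = G.src st ∨ u = G.tgt st := by
      rcases step_endpoints stE with ⟨-, h2⟩ | ⟨-, h2⟩ <;>
        rcases step_endpoints st with ⟨h3, h4⟩ | ⟨h3, h4⟩ <;>
          rw [← htgtE, h2, heq] at * <;>
            [exact Or.inr h4.symm; exact Or.inl h3.symm; exact Or.inl h3.symm;
              exact Or.inr h4.symm]
    rcases hu' with h | h
    · exact hqsrc st hstq (h ▸ hu)
    · exact hqdrop st hst (h ▸ hu)
  -- the enlarged subgraph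
  set K : G.Sub := {
    verts := (H.verts ∪ {x}) ∪ {v | ∃ st ∈ q, G.tgt st = v}
    edges := (H.edges ∪ {stE.1}) ∪ {f | ∃ st ∈ q, st.1 = f}
    fst_mem := by
      intro f hf
      rcases hf with (hf | hf) | hf
      · exact Or.inl (Or.inl (H.fst_mem f hf))
      · rw [Set.mem_singleton_iff] at hf
        subst hf
        rcases step_endpoints stE with ⟨h1, h2⟩ | ⟨h1, h2⟩
        · exact Or.inl (Or.inr (by rw [← h1, hsrcE]; rfl))
        · exact Or.inl (Or.inl (by rw [← h2, htgtE]; exact hu))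
      · obtain ⟨st, hst, rfl⟩ := hf
        rcases step_endpoints st with ⟨h1, h2⟩ | ⟨h1, h2⟩
        · rcases ditrail_srcs hqdit st hst with h | ⟨st', hst', h⟩
          · exact Or.inl (Or.inr (by rw [← h1, h]; rfl))
          · exact Or.inr ⟨st', (List.dropLast_sublist q).mem hst', by rw [← h1, h]⟩
        · exact Or.inr ⟨st, hst, h2⟩
    snd_mem := by
      intro f hf
      rcases hf with (hf | hf) | hf
      · exact Or.inl (Or.inl (H.snd_mem f hf))
      · rw [Set.mem_singleton_iff] at hf
        subst hf
        rcases step_endpoints stE with ⟨h1, h2⟩ | ⟨h1, h2⟩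
        · exact Or.inl (Or.inl (by rw [← h2, htgtE]; exact hu))
        · exact Or.inl (Or.inr (by rw [← h1, hsrcE]; rfl))
      · obtain ⟨st, hst, rfl⟩ := hf
        rcases step_endpoints st with ⟨h1, h2⟩ | ⟨h1, h2⟩
        · exact Or.inr ⟨st, hst, h2⟩
        · rcases ditrail_srcs hqdit st hst with h | ⟨st', hst', h⟩
          · exact Or.inl (Or.inr (by rw [← h1, h]; rfl))
          · exact Or.inr ⟨st', (List.dropLast_sublist q).mem hst', by rw [← h1, h]⟩ } with hKdef
  have hKe_H : H.edges ⊆ K.edges := fun f hf => Or.inl (Or.inl hf)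
  have hKe_e : stE.1 ∈ K.edges := Or.inl (Or.inr rfl)
  have hKe_q : ∀ st ∈ q, st.1 ∈ K.edges := fun st hst => Or.inr ⟨st, hst, rfl⟩
  have hstEdit : G.IsDitrail [stE] x u := by
    refine ⟨by simp, List.isChain_singleton _, ?_, ?_, by simp⟩
    · intro st h; simp only [List.head?_cons, Option.some.injEq] at h; rw [← h, hsrcE]
    · intro st h; simp only [List.getLast?_singleton, Option.some.injEq] at h
      rw [← h, htgtE]
  -- the two ditrails for x
  have route1 : G.ReachW K.edges (G.ssign stE) (!α) x r := by
    refine toRoot hH hKe_H hstEdit (by simp) hu ?_ ?_ ?_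
    · intro st hst; rw [List.mem_singleton] at hst; rw [hst]; exact hKe_e
    · intro st hst; rw [List.mem_singleton] at hst; rw [hst]; exact heEnotH
    · intro st h; simp only [List.head?_cons, Option.some.injEq] at h; rw [← h]
  have route2 : G.ReachW K.edges (!(G.ssign stE)) (!α) x r :=
    toRoot hH hKe_H hqdit hqne hwH hKe_q hqEnotH
      (fun st h => hhead st (by rw [← hqhead]; exact h))
  have hclaim : ∀ v ∈ K.verts,
      G.ReachW K.edges α (!α) v r ∧ G.ReachW K.edges (!α) (!α) v r := by
    have hHcase : ∀ v ∈ H.verts,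
        G.ReachW K.edges α (!α) v r ∧ G.ReachW K.edges (!α) (!α) v r :=
      fun v hv => ⟨ReachW_mono hKe_H (hH.1.2 v hv), ReachW_mono hKe_H (hH.2 v hv)⟩
    intro v hv
    rcases hv with (hv | hv) | hv
    · exact hHcase v hv
    · rw [Set.mem_singleton_iff] at hv
      subst hv
      exact bothSigns (G.ssign stE) route1 route2
    · by_cases hvH : v ∈ H.verts
      · exact hHcase v hvH
      obtain ⟨st0, hst0, rfl⟩ := hv
      obtain ⟨j, hjlen, hjeq⟩ := List.mem_iff_getElem.mp hst0
      have hjlt : j < q.length - 1 := by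
        by_contra hcon
        have hji : j = i := by omega
        subst hji
        apply hvH
        rw [← hjeq, hqj _ (by omega) hjlen (by omega)]
        exact hwH
      set p1 := q.take (j+1) with hp1def
      set p2 := q.drop (j+1) with hp2def
      have hp1l : p1.length = j + 1 := by rw [hp1def, List.length_take]; omega
      have hp1ne : p1 ≠ [] := by intro h; rw [h] at hp1l; simp at hp1l
      have hp1last : p1.getLast? = some st0 := by rw [hp1def, take_getLast? hjlen, hjeq]
      have hsplit : G.IsDitrail (p1 ++ p2) x w := by
        rw [hp1def, hp2def, List.take_append_drop]; exact hqdit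
      have hpre : G.IsDitrail p1 x (G.tgt st0) := ditrail_prefix hsplit hp1last
      have hp2ne : p2 ≠ [] := by
        rw [hp2def]; intro h; rw [List.drop_eq_nil_iff] at h; omega
      have hj1 : j + 1 < q.length := by omega
      have hb : p2.head? = some (q[j+1]) := by
        rw [hp2def, List.head?_eq_getElem?, List.getElem?_drop]
        simp [List.getElem?_eq_getElem hj1]
      have hsuf := ditrail_suffix hsplit hp1last hb
      have hp1mem : ∀ st ∈ p1, st ∈ q.dropLast := by
        intro st hst
        have heq1 : p1 = q.dropLast.take (j+1) := by
          rw [List.dropLast_eq_take, List.take_take, hp1def]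
          congr 1
          omega
        exact heq1 ▸ hst |> List.mem_of_mem_take
      have hp1memq : ∀ st ∈ p1, st ∈ q :=
        fun st hst => (List.dropLast_sublist q).mem (hp1mem st hst)
      have hp1head : p1.head? = q.head? := by rw [hp1def]; exact take_head? q (by omega)
      -- route A : suffix
      have routeA : G.ReachW K.edges (!(G.tsign st0)) (!α) (G.tgt st0) r := by
        refine toRoot hH hKe_H hsuf.1 hp2ne hwH ?_ ?_ ?_
        · intro st hst; exact hKe_q st (List.mem_of_mem_drop (hp2def ▸ hst))
        · intro st hst; exact hqEnotH st (List.mem_of_mem_drop (hp2def ▸ hst))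
        · intro st h
          rw [hb] at h
          have : st = q[j+1] := by exact (Option.some.inj h).symm
          rw [this, hsuf.2, Bool.not_not]
      -- route B : reversed prefix followed by the edge stE
      set rp := p1.reverse.map (fun st : G.Step => (st.1, !st.2)) with hrpdef
      have hrpne : rp ≠ [] := by
        rw [hrpdef]; simp only [ne_eq, List.map_eq_nil_iff, List.reverse_eq_nil_iff]
        exact hp1ne
      have hrpmem : ∀ st ∈ rp, ∃ s0 ∈ p1, st.1 = s0.1 := by
        intro st hst
        rw [hrpdef, List.mem_map] at hst
        obtain ⟨s0, hs0, rfl⟩ := hst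
        exact ⟨s0, List.mem_reverse.mp hs0, rfl⟩
      have hrev : G.IsDitrail rp (G.tgt st0) x := hpre.reverse
      have hrplast : rp.getLast? = p1.head?.map (fun st : G.Step => (st.1, !st.2)) := by
        rw [hrpdef, List.getLast?_map, List.getLast?_reverse]
      have hrphead : rp.head? = some (st0.1, !st0.2) := by
        rw [hrpdef, List.head?_map, List.head?_reverse, hp1last]; rfl
      obtain ⟨h0, hh0⟩ : ∃ h0, p1.head? = some h0 := by
        rcases p1 with _ | ⟨a, _⟩
        · exact absurd rfl hp1ne
        · exact ⟨a, rfl⟩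
      have hh0sign : G.ssign h0 = !(G.ssign stE) :=
        hhead h0 (by rw [← hqhead, ← hp1head]; exact hh0)
      have happ : G.IsDitrail (rp ++ [stE]) (G.tgt st0) u := by
        refine hrev.append hstEdit ?_ ?_
        · intro st hst st' hst'
          rw [List.mem_singleton] at hst'
          subst hst'
          obtain ⟨s0, hs0, heq0⟩ := hrpmem st hst
          rw [heq0]
          exact heEnotq s0 (hp1mem s0 hs0)
        · intro a b ha hb2
          rw [List.head?_cons] at hb2
          have hbE : b = stE := (Option.some.inj hb2).symm
          rw [hrplast, hh0] at ha
          simp only [Option.map_some] at ha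
          have haE : a = (h0.1, !h0.2) := (Option.some.inj ha).symm
          rw [haE, hbE, flip_tsign, hh0sign]
      have routeB : G.ReachW K.edges (G.tsign st0) (!α) (G.tgt st0) r := by
        refine toRoot hH hKe_H happ (by simp) hu ?_ ?_ ?_
        · intro st hst
          rcases List.mem_append.mp hst with h | h
          · obtain ⟨s0, hs0, heq0⟩ := hrpmem st h
            rw [heq0]
            exact hKe_q s0 (hp1memq s0 hs0)
          · rw [List.mem_singleton] at h; rw [h]; exact hKe_e
        · intro st hst
          rcases List.mem_append.mp hst with h | h
          · obtain ⟨s0, hs0, heq0⟩ := hrpmem st h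
            rw [heq0]
            exact hqEnotH s0 (hp1memq s0 hs0)
          · rw [List.mem_singleton] at h; rw [h]; exact heEnotH
        · intro st h
          rw [append_head? _ hrpne, hrphead] at h
          have : st = (st0.1, !st0.2) := Option.some.inj h |>.symm
          rw [this, flip_ssign]
      exact bothSigns (G.tsign st0) routeB routeA
  have hKstrong : K.IsStrong α r :=
    ⟨⟨Or.inl (Or.inl hrH), fun v hv => (hclaim v hv).1⟩, fun v hv => (hclaim v hv).2⟩
  exact hx ((hmax K hKstrong).1 (Or.inl (Or.inr rfl)))

end BG

theorem stmt10 {V : Type} {G : BG V} (α : Bool) (r : V)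
    (hG : G.IsRadial α r) (hstrong : G.Reach (!α) (!α) r r)
    (H : G.Sub) (hH : H.IsStrong α r)
    (hmax : ∀ K : G.Sub, K.IsStrong α r → K.le H) :
    ∀ x, x ∉ H.verts → (∃ u ∈ H.verts, G.Adj x u) → G.SublinearVtx α r x := by
  intro x hx hadj
  obtain ⟨u, hu, e, he⟩ := hadj
  refine ⟨hG x, ?_⟩
  intro hcon
  have key : ∀ stE : G.Step, G.src stE = x → G.tgt stE = u → False := by
    intro stE hsrc htgt
    by_cases hγ : G.ssign stE = α
    · obtain ⟨Q, hQ, -, -, -, hQh, -⟩ := hcon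
      refine BG.main_aux hH hmax hx hu stE hsrc htgt hQ ?_
      intro st h
      rw [h] at hQh
      simp only [Option.map_some, Option.getD_some] at hQh
      rw [hγ, hQh]
    · have hγ2 : G.ssign stE = !α := by cases α <;> cases hs : G.ssign stE <;> simp_all
      obtain ⟨P, hP, -, -, -, hPh, -⟩ := hG x
      refine BG.main_aux hH hmax hx hu stE hsrc htgt hP ?_
      intro st h
      rw [h] at hPh
      simp only [Option.map_some, Option.getD_some] at hPh
      rw [hγ2, Bool.not_not, hPh]
  rcases he with ⟨h1, h2⟩ | ⟨h1, h2⟩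
  · exact key (e, true) (by simp [BG.src, h1]) (by simp [BG.tgt, h2])
  · exact key (e, false) (by simp [BG.src, h2]) (by simp [BG.tgt, h1])
end
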